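/- arXiv:2509.04634 — 3 statements merged into one kernel-verified Lean document; each statement's English description precedes it below -/
import Mathlib

section
/- Let 0 < λ_s < 1, δ > 0, and let ψ : ℝ → ℝ be a smooth even bump function with ψ = 1 on [0, δ/2], ψ = 0 on [δ, ∞), x·ψ'(x) ≤ 0, and (x ψ'(x) + ψ(x)) ψ(y) ≤ 1 for all x, y. Fix a, c with √(a²+c²) ≤ δ and k ∈ ℕ, k ≥ 1. Then the map b ↦ ψ(kb)·ψ(√(a²+c²))·(λ_s/2 − 1)·b + b is a strictly increasing function of b on [−δ, δ] that fixes −δ and δ; in particular it maps [−δ, δ] bijectively onto [−δ, δ]. -/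
theorem stmt_5 (lam_s δ a c : ℝ) (ψ : ℝ → ℝ) (k : ℕ)
    (h0 : 0 < lam_s) (h1 : lam_s < 1) (hδ : 0 < δ)
    (hsmooth : ContDiff ℝ (⊤ : ℕ∞) ψ)
    (heven : ∀ x : ℝ, ψ x = ψ (-x))
    (hone : ∀ x ∈ Set.Icc (0:ℝ) (δ/2), ψ x = 1)
    (hzero : ∀ x : ℝ, δ ≤ x → ψ x = 0)
    (hsign : ∀ x : ℝ, x * deriv ψ x ≤ 0)
    (hbound : ∀ x y : ℝ, (x * deriv ψ x + ψ x) * ψ y ≤ 1)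
    (hac : Real.sqrt (a^2 + c^2) ≤ δ) (hk : 1 ≤ k) :
    StrictMonoOn (fun b : ℝ =>
        ψ (k*b) * ψ (Real.sqrt (a^2+c^2)) * (lam_s/2 - 1) * b + b) (Set.Icc (-δ) δ) ∧
    (ψ (k*(-δ)) * ψ (Real.sqrt (a^2+c^2)) * (lam_s/2 - 1) * (-δ) + (-δ) = -δ) ∧
    (ψ (k*δ) * ψ (Real.sqrt (a^2+c^2)) * (lam_s/2 - 1) * δ + δ = δ) ∧
    Set.BijOn (fun b : ℝ =>
        ψ (k*b) * ψ (Real.sqrt (a^2+c^2)) * (lam_s/2 - 1) * b + b)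
      (Set.Icc (-δ) δ) (Set.Icc (-δ) δ) := by
  set r := Real.sqrt (a^2 + c^2) with hr
  set C := ψ r * (lam_s/2 - 1) with hC
  set f := fun b : ℝ => ψ ((k:ℝ)*b) * ψ r * (lam_s/2 - 1) * b + b with hf
  have hψd : Differentiable ℝ ψ := hsmooth.differentiable (by simp)
  -- derivative
  have hder : ∀ b : ℝ, HasDerivAt f
      ((((k:ℝ)*b) * deriv ψ ((k:ℝ)*b) + ψ ((k:ℝ)*b)) * C + 1) b := by
    intro b
    have h1' : HasDerivAt (fun b : ℝ => (k:ℝ)*b) (k:ℝ) b := by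
      simpa using (hasDerivAt_id b).const_mul (k:ℝ)
    have h2 : HasDerivAt (fun b : ℝ => ψ ((k:ℝ)*b)) (deriv ψ ((k:ℝ)*b) * (k:ℝ)) b :=
      (hψd ((k:ℝ)*b)).hasDerivAt.comp b h1'
    have h3 : HasDerivAt (fun b : ℝ => ψ ((k:ℝ)*b) * ψ r * (lam_s/2 - 1) * b)
        ((deriv ψ ((k:ℝ)*b) * (k:ℝ)) * (ψ r * (lam_s/2 - 1)) * b
          + ψ ((k:ℝ)*b) * (ψ r * (lam_s/2 - 1)) * 1) b := by
      have := ((h2.mul_const (ψ r * (lam_s/2 - 1))).fun_mul (hasDerivAt_id' b))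
      simpa [mul_assoc, mul_comm, mul_left_comm] using this
    have h4 := h3.fun_add (hasDerivAt_id' b)
    convert h4 using 1
    rfl
    rfl
    rw [hC]; ring
  have hfd : Differentiable ℝ f := fun b => (hder b).differentiableAt
  have hderiv_pos : ∀ b : ℝ, lam_s/2 ≤ deriv f b := by
    intro b
    rw [(hder b).deriv]
    have hQ : (((k:ℝ)*b) * deriv ψ ((k:ℝ)*b) + ψ ((k:ℝ)*b)) * ψ r ≤ 1 := hbound _ _
    have hL : lam_s/2 - 1 < 0 := by linarith
    have : (((k:ℝ)*b) * deriv ψ ((k:ℝ)*b) + ψ ((k:ℝ)*b)) * C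
        ≥ 1 * (lam_s/2 - 1) := by
      rw [hC, ← mul_assoc]
      exact mul_le_mul_of_nonpos_right hQ hL.le
    linarith
  have hpos : ∀ b : ℝ, 0 < deriv f b := fun b => lt_of_lt_of_le (by linarith) (hderiv_pos b)
  have hmono : StrictMonoOn f (Set.Icc (-δ) δ) :=
    (strictMono_of_deriv_pos hpos).strictMonoOn _
  -- endpoints
  have hkδ : δ ≤ (k:ℝ)*δ := by
    have : (1:ℝ) ≤ (k:ℝ) := by exact_mod_cast hk
    nlinarith
  have hψkδ : ψ ((k:ℝ)*δ) = 0 := hzero _ hkδ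
  have hψknegδ : ψ ((k:ℝ)*(-δ)) = 0 := by
    rw [show (k:ℝ)*(-δ) = -((k:ℝ)*δ) by ring, ← heven]
    exact hψkδ
  have hend1 : f (-δ) = -δ := by
    show ψ ((k:ℝ)*(-δ)) * ψ r * (lam_s/2 - 1) * (-δ) + (-δ) = -δ
    rw [hψknegδ]; ring
  have hend2 : f δ = δ := by
    show ψ ((k:ℝ)*δ) * ψ r * (lam_s/2 - 1) * δ + δ = δ
    rw [hψkδ]; ring
  refine ⟨hmono, by simpa [hf] using hend1, by simpa [hf] using hend2, ?_, ?_, ?_⟩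
  · -- MapsTo
    intro b hb
    rcases hb with ⟨hb1, hb2⟩
    have hmo := hmono.monotoneOn
    constructor
    · have := hmo (Set.mem_Icc.mpr ⟨le_refl _, by linarith⟩) (Set.mem_Icc.mpr ⟨hb1, hb2⟩) hb1
      rwa [hend1] at this
    · have := hmo (Set.mem_Icc.mpr ⟨hb1, hb2⟩) (Set.mem_Icc.mpr ⟨by linarith, le_refl _⟩) hb2
      rwa [hend2] at this
  · exact hmono.injOn
  · -- SurjOn
    have hcont : ContinuousOn f (Set.Icc (-δ) δ) := hfd.continuous.continuousOn
    have := intermediate_value_Icc (by linarith : -δ ≤ δ) hcont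
    rw [hend1, hend2] at this
    exact this
end

section
/- Let λ_uu, λ_ss, λ_s > 0 with λ_ss·λ_s·λ_uu = 1 and 1/P_b² ≥ 4λ_ss² (P_b ≠ 0 real), and suppose M/λ_s² ≥ 2 where M > 0, ε₀ > 0 satisfy: for all |u| ≤ ε₀, |ε| ≤ ε₀, |c| ≥ 1/100, (c² + cu)/((1+ε²+c²)(1+ε²)) ≥ M. Let Q_a, Q_c, ε be real numbers with |ε| ≤ ε₀, |8ε(−Q_c)(−Q_a+ε)| ≤ ε₀, and |8ε(1+εQ_a)(−Q_a+ε)| ≤ λ_s²/2. Then for every real c with |c| ≥ 1/100, the quantity D² := [((1+εQ_a−cQ_c)/P_b)²λ_uu² + (λ_ss c)²λ_uu² + (λ_uu ε)²((−Q_a+ε)/P_b)² + (λ_ss c)²((−Q_a+ε)/P_b)² + 2λ_uu²ε(1+εQ_a−cQ_c)(−Q_a+ε)/P_b²] / ((1+ε²+c²)(1+ε²)) satisfies D² ≥ 3/2 > 1. -/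
/-!
Expanding the numerator, the cross term `2 λ_uu² ε X B / P_b²` (with `X = 1 + ε Q_a - c Q_c`,
`B = ε - Q_a`) combines with the first and third terms into the square
`λ_uu² (X + ε B)² / P_b²`. By AM-GM and `1 / P_b² ≥ 4 λ_ss²` this square is at least
`8 λ_ss² λ_uu² ε X B`, so after dropping nonnegative terms the numerator is at least
`λ_s⁻² (c² + c u + w)`. With `Den = (1 + ε² + c²)(1 + ε²)`, the hypothesis on `M` bounds
`λ_s⁻² (c² + c u) / Den` below by `M / λ_s² ≥ 2`, and since `Den ≥ 1` the remaining term
`λ_s⁻² w / Den` is at least `-1/2`.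
-/

/-- The numerator of `D²`, with `X = 1 + ε Q_a - c Q_c` and `B = -Q_a + ε`. -/
noncomputable def detSqNum (lam_uu lam_ss P ε c X B : ℝ) : ℝ :=
  (X / P)^2 * lam_uu^2 + (lam_ss * c)^2 * lam_uu^2 + (lam_uu * ε)^2 * (B / P)^2
    + (lam_ss * c)^2 * (B / P)^2 + 2 * lam_uu^2 * ε * (X * B / P^2)

lemma detSqNum_eq (lam_uu lam_ss P ε c X B : ℝ) :
    detSqNum lam_uu lam_ss P ε c X B
      = lam_uu^2 * (X + ε * B)^2 / P^2 + lam_ss^2 * c^2 * B^2 / P^2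
        + lam_ss^2 * lam_uu^2 * c^2 := by
  unfold detSqNum
  ring

lemma eight_mul_mul_le_sq_add_div_sq {p q : ℝ} (hq : 0 ≤ q) (hqp : 4 * q ≤ 1 / p^2)
    (x y : ℝ) :
    8 * q * (x * y) ≤ (x + y)^2 / p^2 :=
  calc 8 * q * (x * y) = 2 * q * (4 * x * y) := by ring
    _ ≤ 2 * q * (x + y)^2 := by gcongr; exact four_mul_le_sq_add x y
    _ ≤ 1 / p^2 * (x + y)^2 := by gcongr; linarith
    _ = (x + y)^2 / p^2 := by ring

lemma mul_sq_add_eight_le_detSqNum {lam_uu lam_ss P : ℝ} (hP : 4 * lam_ss^2 ≤ 1 / P^2)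
    (ε c X B : ℝ) :
    lam_ss^2 * lam_uu^2 * (c^2 + 8 * (X * (ε * B))) ≤ detSqNum lam_uu lam_ss P ε c X B := by
  have hsq := eight_mul_mul_le_sq_add_div_sq (sq_nonneg lam_ss) hP X (ε * B)
  have hB : 0 ≤ lam_ss^2 * c^2 * B^2 / P^2 := by positivity
  rw [detSqNum_eq, mul_div_assoc]
  nlinarith [mul_le_mul_of_nonneg_left hsq (sq_nonneg lam_uu)]

lemma neg_le_div_of_one_le {a b d : ℝ} (hb : 0 ≤ b) (ha : -b ≤ a) (hd : 1 ≤ d) :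
    -b ≤ a / d :=
  calc -b ≤ -b / d := by rw [neg_div]; exact neg_le_neg (div_le_self hb hd)
    _ ≤ a / d := by gcongr

theorem stmt_9_general (lam_uu lam_ss lam_s P_b M ε₀ Q_a Q_c ε : ℝ)
    (hprod : lam_ss * lam_s * lam_uu = 1)
    (hPb2 : 4 * lam_ss^2 ≤ 1 / P_b^2)
    (hMest : ∀ u ε' c : ℝ, |u| ≤ ε₀ → |ε'| ≤ ε₀ → (1:ℝ)/100 ≤ |c| →
      M ≤ (c^2 + c*u) / ((1 + ε'^2 + c^2) * (1 + ε'^2)))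
    (hM2 : 2 ≤ M / lam_s^2)
    (hε : |ε| ≤ ε₀)
    (hu : |8 * ε * (-Q_c) * (-Q_a + ε)| ≤ ε₀)
    (hw : |8 * ε * (1 + ε*Q_a) * (-Q_a + ε)| ≤ lam_s^2 / 2) :
    ∀ c : ℝ, (1:ℝ)/100 ≤ |c| →
      (3:ℝ)/2 ≤
        (((1 + ε*Q_a - c*Q_c)/P_b)^2 * lam_uu^2
          + (lam_ss*c)^2 * lam_uu^2
          + (lam_uu*ε)^2 * ((-Q_a + ε)/P_b)^2
          + (lam_ss*c)^2 * ((-Q_a + ε)/P_b)^2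
          + 2 * lam_uu^2 * ε * ((1 + ε*Q_a - c*Q_c) * (-Q_a + ε) / P_b^2))
        / ((1 + ε^2 + c^2) * (1 + ε^2)) ∧
      (1:ℝ) < 3/2 := by
  intro c hc
  refine ⟨?_, by norm_num⟩
  set K := lam_ss^2 * lam_uu^2
  set Den := (1 + ε^2 + c^2) * (1 + ε^2)
  have hK : K * lam_s^2 = 1 := by
    linear_combination (lam_ss * lam_s * lam_uu + 1) * hprod
  have hs : 0 < lam_s^2 := (sq_nonneg _).lt_of_ne fun h ↦ by simp [← h] at hK
  have hM : 2 * lam_s^2 ≤ M := (le_div_iff₀ hs).1 hM2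
  have hDen : 1 ≤ Den := by
    apply one_le_mul_of_one_le_of_one_le <;> nlinarith [sq_nonneg ε, sq_nonneg c]
  have hcu := hMest _ _ _ hu hε hc
  have hwDen := neg_le_div_of_one_le (by positivity) (abs_le.1 hw).1 hDen
  calc (3:ℝ)/2 = K * (2 * lam_s^2) + K * -(lam_s^2 / 2) := by linear_combination (-3/2 : ℝ) * hK
    _ ≤ K * ((c^2 + c * (8 * ε * (-Q_c) * (-Q_a + ε))) / Den)
        + K * (8 * ε * (1 + ε*Q_a) * (-Q_a + ε) / Den) := by gcongr; linarith
    _ = K * (c^2 + 8 * ((1 + ε*Q_a - c*Q_c) * (ε * (-Q_a + ε)))) / Den := by ring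
    _ ≤ _ := by gcongr; exact mul_sq_add_eight_le_detSqNum hPb2 ..

theorem stmt_9 (lam_uu lam_ss lam_s P_b M ε₀ Q_a Q_c ε : ℝ)
    (huu : 0 < lam_uu) (hss : 0 < lam_ss) (hs : 0 < lam_s)
    (hprod : lam_ss * lam_s * lam_uu = 1)
    (hPb : P_b ≠ 0) (hPb2 : 4 * lam_ss^2 ≤ 1 / P_b^2)
    (hM : 0 < M) (hε₀ : 0 < ε₀)
    (hMest : ∀ u ε' c : ℝ, |u| ≤ ε₀ → |ε'| ≤ ε₀ → (1:ℝ)/100 ≤ |c| →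
      M ≤ (c^2 + c*u) / ((1 + ε'^2 + c^2) * (1 + ε'^2)))
    (hM2 : 2 ≤ M / lam_s^2)
    (hε : |ε| ≤ ε₀)
    (hu : |8 * ε * (-Q_c) * (-Q_a + ε)| ≤ ε₀)
    (hw : |8 * ε * (1 + ε*Q_a) * (-Q_a + ε)| ≤ lam_s^2 / 2) :
    ∀ c : ℝ, (1:ℝ)/100 ≤ |c| →
      (3:ℝ)/2 ≤
        (((1 + ε*Q_a - c*Q_c)/P_b)^2 * lam_uu^2
          + (lam_ss*c)^2 * lam_uu^2
          + (lam_uu*ε)^2 * ((-Q_a + ε)/P_b)^2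
          + (lam_ss*c)^2 * ((-Q_a + ε)/P_b)^2
          + 2 * lam_uu^2 * ε * ((1 + ε*Q_a - c*Q_c) * (-Q_a + ε) / P_b^2))
        / ((1 + ε^2 + c^2) * (1 + ε^2)) ∧
      (1:ℝ) < 3/2 :=
  stmt_9_general lam_uu lam_ss lam_s P_b M ε₀ Q_a Q_c ε hprod hPb2 hMest hM2 hε hu hw
end

section
/- Let m > 0, δ > 0, and let φ : ℝ → ℝ be a smooth even bump function with φ = 1 on [0, δ/2], φ = 0 on [δ, ∞), x·φ'(x) ≤ 0, and −m ≤ (x φ'(x) + φ(x))·φ(y) ≤ 1 for all x, y. Let λ_ss ∈ (0, 1/2). Define R₂(a,b,c) = φ(kc)·φ(√(a²+b²))·(2 − λ_ss)·c + λ_ss·c. If the partial derivative ∂R₂/∂c = (kc·φ'(kc) + φ(kc))·φ(√(a²+b²))·(2 − λ_ss) + λ_ss is strictly positive at every point, then necessarily inf{(kc φ'(kc) + φ(kc))·φ(r) : c, r ∈ ℝ} > −λ_ss/(2 − λ_ss); in particular, if this infimum equals −m, then 1/(1 − 2/λ_ss) < −m, which fails once λ_ss is sufficiently small (λ_ss <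 2m/(1+m)). -/
theorem stmt_17 (m δ lam_ss : ℝ) (φ : ℝ → ℝ)
    (hm : 0 < m) (hδ : 0 < δ)
    (hsmooth : ContDiff ℝ (⊤ : ℕ∞) φ)
    (heven : ∀ x : ℝ, φ x = φ (-x))
    (hone : ∀ x ∈ Set.Icc (0:ℝ) (δ/2), φ x = 1)
    (hzero : ∀ x : ℝ, δ ≤ x → φ x = 0)
    (hsign : ∀ x : ℝ, x * deriv φ x ≤ 0)
    (hbound : ∀ x y : ℝ,
      -m ≤ (x * deriv φ x + φ x) * φ y ∧ (x * deriv φ x + φ x) * φ y ≤ 1)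
    (hss0 : 0 < lam_ss) (hss1 : lam_ss < 1/2)
    (hpos : ∀ (k : ℕ) (a b c : ℝ),
      0 < ((k:ℝ)*c * deriv φ ((k:ℝ)*c) + φ ((k:ℝ)*c))
            * φ (Real.sqrt (a^2 + b^2)) * (2 - lam_ss) + lam_ss) :
    (∀ (k : ℕ) (a b c : ℝ),
      -lam_ss / (2 - lam_ss) <
        ((k:ℝ)*c * deriv φ ((k:ℝ)*c) + φ ((k:ℝ)*c)) * φ (Real.sqrt (a^2 + b^2))) ∧
    (sInf {x : ℝ | ∃ (k : ℕ) (c r : ℝ),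
        x = ((k:ℝ)*c * deriv φ ((k:ℝ)*c) + φ ((k:ℝ)*c)) * φ r} = -m →
      1 / (1 - 2/lam_ss) < -m) ∧
    (lam_ss < 2*m/(1+m) → ¬ (1 / (1 - 2/lam_ss) < -m)) := by
  have h2l : (0:ℝ) < 2 - lam_ss := by linarith
  have hdiv : 1 / (1 - 2/lam_ss) = -lam_ss / (2 - lam_ss) := by
    rw [div_eq_div_iff]
    · field_simp; ring
    · rw [sub_ne_zero]
      intro h
      have : lam_ss * 1 = lam_ss * (2/lam_ss) := by rw [h]
      rw [mul_div_cancel₀ _ (ne_of_gt hss0)] at this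
      linarith
    · linarith
  have part1 : ∀ (k : ℕ) (a b c : ℝ),
      -lam_ss / (2 - lam_ss) <
        ((k:ℝ)*c * deriv φ ((k:ℝ)*c) + φ ((k:ℝ)*c)) * φ (Real.sqrt (a^2 + b^2)) := by
    intro k a b c
    have := hpos k a b c
    rw [div_lt_iff₀ h2l]
    nlinarith
  refine ⟨part1, ?_, ?_⟩
  · -- part 2
    intro hinf
    have hφeven : ∀ y : ℝ, φ |y| = φ y := by
      intro y
      rcases abs_cases y with ⟨h1, _⟩ | ⟨h1, _⟩
      · rw [h1]
      · rw [h1, ← heven]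
    have hφ0 : ∀ x : ℝ, δ ≤ |x| → φ x = 0 := by
      intro x hx
      rcases abs_cases x with ⟨h1, _⟩ | ⟨h1, _⟩
      · exact hzero x (h1 ▸ hx)
      · rw [heven x]; exact hzero (-x) (h1 ▸ hx)
    have hd0 : ∀ x : ℝ, δ < |x| → deriv φ x = 0 := by
      intro x hx
      have hopen : IsOpen {y : ℝ | δ < |y|} :=
        isOpen_lt continuous_const continuous_abs
      have hev : φ =ᶠ[nhds x] fun _ => (0:ℝ) := by
        filter_upwards [hopen.mem_nhds hx] with y hy using hφ0 y (le_of_lt hy)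
      rw [hev.deriv_eq]
      exact deriv_const x 0
    set g : ℝ → ℝ := fun x => x * deriv φ x + φ x with hg
    set h : ℝ × ℝ → ℝ := fun p => g p.1 * φ p.2 with hh
    have hcont : Continuous h := by
      have hdc : Continuous (deriv φ) := hsmooth.continuous_deriv (by simp)
      exact ((continuous_fst.mul (hdc.comp continuous_fst)).add
        (hsmooth.continuous.comp continuous_fst)).mul
        (hsmooth.continuous.comp continuous_snd)
    have hK : IsCompact ((Set.Icc (-δ) δ) ×ˢ (Set.Icc (-δ) δ)) :=
      isCompact_Icc.prod isCompact_Icc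
    have hKne : ((Set.Icc (-δ) δ) ×ˢ (Set.Icc (-δ) δ)).Nonempty :=
      ⟨(0, 0), ⟨⟨show -δ ≤ (0:ℝ) by linarith, show (0:ℝ) ≤ δ by linarith⟩,
        ⟨show -δ ≤ (0:ℝ) by linarith, show (0:ℝ) ≤ δ by linarith⟩⟩⟩
    obtain ⟨p0, hp0K, hmin⟩ := hK.exists_isMinOn hKne hcont.continuousOn
    set S : Set ℝ := {x : ℝ | ∃ (k : ℕ) (c r : ℝ),
        x = ((k:ℝ)*c * deriv φ ((k:ℝ)*c) + φ ((k:ℝ)*c)) * φ r} with hS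
    have hMS : h p0 ∈ S := by
      refine ⟨1, p0.1, p0.2, ?_⟩
      simp [hh, hg]
    have hM0 : h p0 ≤ 0 := by
      have hmem : ((0:ℝ), δ) ∈ (Set.Icc (-δ) δ) ×ˢ (Set.Icc (-δ) δ) :=
        ⟨⟨show -δ ≤ (0:ℝ) by linarith, show (0:ℝ) ≤ δ by linarith⟩,
          ⟨show -δ ≤ δ by linarith, le_refl δ⟩⟩
      have := hmin hmem
      have hz : φ δ = 0 := hzero δ (le_refl δ)
      simpa [hh, hz] using this
    have hlb : ∀ s ∈ S, h p0 ≤ s := by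
      rintro s ⟨k, c, r, rfl⟩
      set x := (k:ℝ)*c with hx
      by_cases hxδ : |x| ≤ δ
      · by_cases hrδ : |r| ≤ δ
        · have hmem : (x, r) ∈ (Set.Icc (-δ) δ) ×ˢ (Set.Icc (-δ) δ) :=
            ⟨abs_le.mp hxδ, abs_le.mp hrδ⟩
          exact hmin hmem
        · have : φ r = 0 := hφ0 r (le_of_lt (lt_of_not_ge hrδ))
          rw [this, mul_zero]; exact hM0
      · have hdx : deriv φ x = 0 := hd0 x (lt_of_not_ge hxδ)
        have hfx : φ x = 0 := hφ0 x (le_of_lt (lt_of_not_ge hxδ))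
        rw [hdx, hfx]
        simpa using hM0
    have hSbdd : BddBelow S := ⟨h p0, hlb⟩
    have hSne : S.Nonempty := ⟨h p0, hMS⟩
    have h1 : sInf S ≤ h p0 := csInf_le hSbdd hMS
    have h2 : h p0 ≤ sInf S := le_csInf hSne hlb
    have hMeq : h p0 = -m := by rw [← hinf]; exact le_antisymm h2 h1
    have hstrict := part1 1 p0.2 0 p0.1
    have hsqrt : Real.sqrt (p0.2^2 + 0^2) = |p0.2| := by
      simp [Real.sqrt_sq_eq_abs]
    rw [hsqrt, hφeven] at hstrict
    simp only [Nat.cast_one, one_mul] at hstrict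
    rw [hdiv]
    calc -lam_ss / (2 - lam_ss) < h p0 := hstrict
      _ = -m := hMeq
  · -- part 3
    intro hlam hcon
    rw [hdiv] at hcon
    have h4 := (div_lt_iff₀ h2l).mp hcon
    have h5 := (lt_div_iff₀ (by linarith : (0:ℝ) < 1 + m)).mp hlam
    nlinarith
end
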